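/- arXiv:alg-geom/9509009 — 2 statements merged into one kernel-verified Lean document; each statement's English description precedes it below -/
import Mathlib

section
/- For an Eulerian poset P of rank d ≥ 0, one has t^d G(P, t^{−1}) = Σ_{0̂ ≤ x ≤ 1̂} (t−1)^{ρ(x)} G([x, 1̂], t). -/
open Finset Polynomial
open scoped Classical

/-- The defining recursion of the Möbius function of a finite poset. -/
def MobiusRec {P : Type*} [PartialOrder P] [Fintype P] (mu : P → P → ℤ) : Prop :=
  (∀ x : P, mu x x = 1) ∧
    ∀ x y : P, x < y → (∑ z : P, if x ≤ z ∧ z ≤ y then mu x z else 0) = 0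

/-- A finite poset with rank function `ρ` is Eulerian if its Möbius function satisfies
`μ(x,y) = (-1)^(ρ(y) - ρ(x))` for all `x ≤ y`. -/
def IsEulerian {P : Type*} [PartialOrder P] [Fintype P] (ρ : P → ℕ) : Prop :=
  ∀ mu : P → P → ℤ, MobiusRec mu → ∀ x y : P, x ≤ y → mu x y = (-1 : ℤ) ^ (ρ y - ρ x)

/-- `ρ` is a rank function of rank `d`: `ρ(⊥) = 0`, `ρ(⊤) = d`, `ρ` is monotone and
increases by one along covering relations. -/
def IsRankFunction {P : Type*} [PartialOrder P] [BoundedOrder P] (ρ : P → ℕ) (d : ℕ) : Prop :=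
  ρ ⊥ = 0 ∧ ρ ⊤ = d ∧ Monotone ρ ∧ ∀ x y : P, x ⋖ y → ρ y = ρ x + 1

/-- The truncation operator `τ_{< d/2}`, keeping only the terms of degree `< d/2`
(that is, `2*i < d`). -/
noncomputable def truncLtHalf (d : ℕ) (p : Polynomial ℤ) : Polynomial ℤ :=
  ∑ i ∈ Finset.range (p.natDegree + 1),
    if 2 * i < d then Polynomial.C (p.coeff i) * Polynomial.X ^ i else 0

/-- Stanley's polynomials `G([x,y],t)` and `H([x,y],t)` of the intervals of a finite graded
poset `P` with rank function `ρ`, given by the recursion: `G = H = 1` on rank-0 intervals,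
`H([x,y],t) = ∑_{x < z ≤ y} (t-1)^(ρ(z)-ρ(x)-1) G([z,y],t)`, and
`G([x,y],t) = τ_{< (ρ(y)-ρ(x))/2} ((1-t) H([x,y],t))`. -/
def GHSystem {P : Type*} [PartialOrder P] [Fintype P] (ρ : P → ℕ)
    (G H : P → P → Polynomial ℤ) : Prop :=
  (∀ x : P, G x x = 1 ∧ H x x = 1) ∧
  (∀ x y : P, x < y →
      H x y = ∑ z : P,
        if x < z ∧ z ≤ y then (Polynomial.X - 1) ^ (ρ z - ρ x - 1) * G z y else 0) ∧
  (∀ x y : P, x < y → G x y = truncLtHalf (ρ y - ρ x) ((1 - Polynomial.X) * H x y))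


/-!
Induct downwards on `x`, proving the formula for every interval `[x, y]`; write
`n = ρ y - ρ x`. Expanding `H([x, y])` with the formula for the intervals `[z, y]`, `x < z`,
and exchanging the two sums, the Eulerian identity `∑_{x < z ≤ w} (-1)^(ρ z - ρ x - 1) = 1`
shows that `H([x, y])` is palindromic of degree `n - 1`. Hence `f = (1 - t) H([x, y])` is
antipalindromic of degree `n`, and for such `f` the reflection of `τ_{< n/2} f` at degree `n`
is `τ_{< n/2} f - f = G([x, y]) + (t - 1) H([x, y])`, which is the right-hand side.
-/

namespace Polynomial

variable {R : Type*}

theorem reflect_sum [Semiring R] {ι : Type*} (N : ℕ) (s : Finset ι) (f : ι → R[X]) :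
    reflect N (∑ i ∈ s, f i) = ∑ i ∈ s, reflect N (f i) :=
  map_sum (⟨⟨reflect N, reflect_zero⟩, fun f g => reflect_add f g N⟩ : R[X] →+ R[X]) f s

variable [CommRing R]

theorem natDegree_X_sub_one_le : (X - 1 : R[X]).natDegree ≤ 1 := by
  simpa using natDegree_X_sub_C_le (1 : R)

theorem natDegree_one_sub_X_le : (1 - X : R[X]).natDegree ≤ 1 := by
  rw [← neg_sub, natDegree_neg]
  exact natDegree_X_sub_one_le

theorem natDegree_X_sub_one_pow_le (n : ℕ) : ((X - 1 : R[X]) ^ n).natDegree ≤ n := by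
  simpa using natDegree_pow_le_of_le n natDegree_X_sub_one_le

theorem reflect_one_sub_X : reflect 1 (1 - X : R[X]) = X - 1 := by
  simp [reflect_sub, reflect_one]

theorem reflect_X_sub_one_pow (n : ℕ) : reflect n ((X - 1 : R[X]) ^ n) = (1 - X) ^ n := by
  induction n with
  | zero => simp [reflect_one]
  | succ n ih =>
    rw [pow_succ', add_comm n 1, reflect_mul _ _ natDegree_X_sub_one_le
      (natDegree_X_sub_one_pow_le n), ih]
    simp [reflect_sub, reflect_one, pow_add]

end Polynomial

theorem coeff_truncLtHalf (n : ℕ) (p : ℤ[X]) (i : ℕ) :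
    (truncLtHalf n p).coeff i = if 2 * i < n then p.coeff i else 0 := by
  simp only [truncLtHalf, finsetSum_coeff, apply_ite (coeff · i), coeff_C_mul_X_pow, coeff_zero]
  rw [sum_eq_single i]
  · simp
  · intro j _ hj
    simp [hj.symm]
  · intro hi
    rw [mem_range, not_lt] at hi
    simp [coeff_eq_zero_of_natDegree_lt hi]

theorem natDegree_truncLtHalf_le (n : ℕ) (p : ℤ[X]) : (truncLtHalf n p).natDegree ≤ n :=
  natDegree_le_iff_coeff_eq_zero.mpr fun i hi => by
    rw [coeff_truncLtHalf, if_neg (by omega)]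

theorem reflect_truncLtHalf {n : ℕ} {p : ℤ[X]} (hdeg : p.natDegree ≤ n)
    (hanti : p.reflect n = -p) : (truncLtHalf n p).reflect n = truncLtHalf n p - p := by
  ext i
  rw [coeff_reflect, coeff_sub]
  rcases le_or_gt i n with hi | hi
  · have hsymm : p.coeff (n - i) = -p.coeff i := by
      simpa [coeff_reflect, revAt_le hi] using congrArg (coeff · i) hanti
    rw [revAt_le hi, coeff_truncLtHalf, coeff_truncLtHalf]
    rcases lt_trichotomy (2 * i) n with h | h | h
    · rw [if_neg (by omega), if_pos h]
      ring
    · -- the middle coefficient of an antipalindromic polynomial vanishes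
      rw [show n - i = i by omega] at hsymm
      rw [if_neg (by omega), if_neg (by omega)]
      omega
    · rw [if_pos (by omega), if_neg (by omega), hsymm]
      ring
  · rw [revAt_eq_self_of_lt hi, coeff_truncLtHalf, if_neg (by omega),
      coeff_eq_zero_of_natDegree_lt (hdeg.trans_lt hi)]
    ring

theorem IsRankFunction.strictMono {P : Type*} [PartialOrder P] [BoundedOrder P] [Finite P]
    {ρ : P → ℕ} {d : ℕ} (hrk : IsRankFunction ρ d) : StrictMono ρ := fun x y hxy => by
  obtain ⟨z, hxz, hzy⟩ := exists_covBy_le_of_lt hxy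
  have := hrk.2.2.2 x z hxz
  have := hrk.2.2.1 hzy
  omega

section FiniteGraded

variable {P : Type*} [PartialOrder P] [Fintype P]

theorem filter_le_le_eq_insert_filter_lt_le {x y : P} (hxy : x ≤ y) :
    univ.filter (fun z => x ≤ z ∧ z ≤ y) =
      insert x (univ.filter fun z => x < z ∧ z ≤ y) := by
  ext z
  simp only [mem_filter, mem_univ, true_and, mem_insert]
  constructor
  · rintro ⟨hxz, hzy⟩
    rcases hxz.eq_or_lt with rfl | hxz
    exacts [Or.inl rfl, Or.inr ⟨hxz, hzy⟩]
  · rintro (rfl | ⟨hxz, hzy⟩)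
    exacts [⟨le_rfl, hxy⟩, ⟨hxz.le, hzy⟩]

variable (P) in
theorem exists_mobiusRec : ∃ mu : P → P → ℤ, MobiusRec mu := by
  let := Fintype.toLocallyFiniteOrder (α := P)
  refine ⟨fun x y => IncidenceAlgebra.mu ℤ x y, fun x => IncidenceAlgebra.mu_self x,
    fun x y hxy => ?_⟩
  have h := IncidenceAlgebra.sum_Icc_mu_right (𝕜 := ℤ) x y
  rw [if_neg hxy.ne] at h
  rw [← sum_filter, ← h]
  exact sum_congr (by ext; simp) fun _ _ => rfl

variable {ρ : P → ℕ}

theorem IsEulerian.sum_neg_one_pow_eq_one (hE : IsEulerian ρ) (hρ : StrictMono ρ) {x y : P}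
    (hxy : x < y) : ∑ z with x < z ∧ z ≤ y, (-1 : ℤ) ^ (ρ z - ρ x - 1) = 1 := by
  obtain ⟨mu, hmu⟩ := exists_mobiusRec P
  have h := hmu.2 x y hxy
  rw [← sum_filter, filter_le_le_eq_insert_filter_lt_le hxy.le, sum_insert (by simp),
    hmu.1] at h
  have hterm : ∀ z ∈ univ.filter fun z => x < z ∧ z ≤ y,
      mu x z = -(-1 : ℤ) ^ (ρ z - ρ x - 1) := by
    intro z hz
    have hxz := (mem_filter.1 hz).2.1
    obtain ⟨k, hk⟩ : ∃ k, ρ z - ρ x = k + 1 :=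
      ⟨ρ z - ρ x - 1, by have := hρ hxz; omega⟩
    rw [hE mu hmu x z hxz.le, hk, Nat.add_sub_cancel, pow_succ]
    ring
  rw [sum_congr rfl hterm, sum_neg_distrib] at h
  linarith

namespace GHSystem

variable {G H : P → P → ℤ[X]} {x y : P}

theorem H_eq (hGH : GHSystem ρ G H) (hxy : x < y) :
    H x y = ∑ z with x < z ∧ z ≤ y, (X - 1) ^ (ρ z - ρ x - 1) * G z y := by
  rw [hGH.2.1 x y hxy, sum_filter]

theorem natDegree_G_le (hGH : GHSystem ρ G H) (hxy : x ≤ y) :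
    (G x y).natDegree ≤ ρ y - ρ x := by
  rcases hxy.eq_or_lt with rfl | hlt
  · simp [(hGH.1 x).1]
  · rw [hGH.2.2 x y hlt]
    exact natDegree_truncLtHalf_le _ _

theorem natDegree_H_le (hGH : GHSystem ρ G H) (hρ : StrictMono ρ) (hxy : x < y) :
    (H x y).natDegree ≤ ρ y - ρ x - 1 := by
  rw [hGH.H_eq hxy]
  refine natDegree_sum_le_of_forall_le _ _ fun z hz => ?_
  obtain ⟨hxz, hzy⟩ := (mem_filter.1 hz).2
  have := hρ hxz
  have := hρ.monotone hzy
  calc _ ≤ (ρ z - ρ x - 1) + (ρ y - ρ z) :=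
        natDegree_mul_le_of_le (natDegree_X_sub_one_pow_le _) (hGH.natDegree_G_le hzy)
    _ ≤ ρ y - ρ x - 1 := by omega

theorem sum_le_le_eq_G_add_mul_H (hGH : GHSystem ρ G H) (hρ : StrictMono ρ) (hxy : x < y) :
    ∑ z with x ≤ z ∧ z ≤ y, (X - 1) ^ (ρ z - ρ x) * G z y = G x y + (X - 1) * H x y := by
  rw [filter_le_le_eq_insert_filter_lt_le hxy.le, sum_insert (by simp), hGH.H_eq hxy, mul_sum,
    Nat.sub_self, pow_zero, one_mul]
  congr 1
  refine sum_congr rfl fun z hz => ?_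
  obtain ⟨k, hk⟩ : ∃ k, ρ z - ρ x = k + 1 :=
    ⟨ρ z - ρ x - 1, by have := hρ (mem_filter.1 hz).2.1; omega⟩
  rw [hk, Nat.add_sub_cancel, pow_succ]
  ring

theorem reflect_H_eq_self (hGH : GHSystem ρ G H) (hE : IsEulerian ρ) (hρ : StrictMono ρ)
    (hxy : x < y)
    (hG : ∀ z, x < z → z ≤ y → (G z y).reflect (ρ y - ρ z) =
      ∑ w with z ≤ w ∧ w ≤ y, (X - 1) ^ (ρ w - ρ z) * G w y) :
    (H x y).reflect (ρ y - ρ x - 1) = H x y := by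
  calc (H x y).reflect (ρ y - ρ x - 1)
      = ∑ z with x < z ∧ z ≤ y, (1 - X) ^ (ρ z - ρ x - 1) *
          ∑ w with z ≤ w ∧ w ≤ y, (X - 1) ^ (ρ w - ρ z) * G w y := by
        rw [hGH.H_eq hxy, reflect_sum]
        refine sum_congr rfl fun z hz => ?_
        obtain ⟨hxz, hzy⟩ := (mem_filter.1 hz).2
        have := hρ hxz
        have := hρ.monotone hzy
        rw [show ρ y - ρ x - 1 = (ρ z - ρ x - 1) + (ρ y - ρ z) by omega,
          reflect_mul _ _ (natDegree_X_sub_one_pow_le _) (hGH.natDegree_G_le hzy),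
          reflect_X_sub_one_pow, hG z hxz hzy]
    _ = ∑ w with x < w ∧ w ≤ y, ∑ z with x < z ∧ z ≤ w,
          (-1 : ℤ[X]) ^ (ρ z - ρ x - 1) * ((X - 1) ^ (ρ w - ρ x - 1) * G w y) := by
        simp_rw [mul_sum]
        rw [sum_comm' fun z w => ?_]
        · refine sum_congr rfl fun w _ => sum_congr rfl fun z hz => ?_
          obtain ⟨hxz, hzw⟩ := (mem_filter.1 hz).2
          have := hρ hxz
          have := hρ.monotone hzw
          rw [show ρ w - ρ x - 1 = (ρ z - ρ x - 1) + (ρ w - ρ z) by omega, pow_add,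
            show (1 - X : ℤ[X]) = -1 * (X - 1) by ring, mul_pow]
          ring
        · simp only [mem_filter, mem_univ, true_and]
          grind
    _ = ∑ w with x < w ∧ w ≤ y, (X - 1) ^ (ρ w - ρ x - 1) * G w y := by
        refine sum_congr rfl fun w hw => ?_
        have h := congrArg (Int.cast : ℤ → ℤ[X])
          (hE.sum_neg_one_pow_eq_one hρ (mem_filter.1 hw).2.1)
        push_cast at h
        rw [← sum_mul, h, one_mul]
    _ = H x y := (hGH.H_eq hxy).symm

theorem reflect_G_eq_sum (hGH : GHSystem ρ G H) (hE : IsEulerian ρ) (hρ : StrictMono ρ)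
    (hxy : x ≤ y) :
    (G x y).reflect (ρ y - ρ x) =
      ∑ z with x ≤ z ∧ z ≤ y, (X - 1) ^ (ρ z - ρ x) * G z y := by
  induction x using WellFoundedGT.induction with
  | _ x ih =>
    rcases hxy.eq_or_lt with rfl | hlt
    · have : univ.filter (fun z => x ≤ z ∧ z ≤ x) = {x} := by
        ext z
        simp [le_antisymm_iff, and_comm]
      simp [this, (hGH.1 x).1, reflect_one]
    · have hH := hGH.reflect_H_eq_self hE hρ hlt ih
      have hdegH := hGH.natDegree_H_le hρ hlt
      have hρxy := hρ hlt
      have hdeg : ((1 - X) * H x y).natDegree ≤ ρ y - ρ x :=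
        (natDegree_mul_le_of_le natDegree_one_sub_X_le hdegH).trans (by omega)
      have hanti : ((1 - X) * H x y).reflect (ρ y - ρ x) = -((1 - X) * H x y) := by
        rw [show ρ y - ρ x = 1 + (ρ y - ρ x - 1) by omega,
          reflect_mul _ _ natDegree_one_sub_X_le hdegH, reflect_one_sub_X, hH]
        ring
      rw [hGH.sum_le_le_eq_G_add_mul_H hρ hlt, hGH.2.2 x y hlt, reflect_truncLtHalf hdeg hanti]
      ring

end GHSystem

end FiniteGraded

/-- For an Eulerian poset `P` of rank `d ≥ 0`, one has
`t^d G(P,t⁻¹) = ∑_{⊥ ≤ x ≤ ⊤} (t-1)^(ρ(x)) G([x,⊤],t)`; the left-hand side is the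
reflection of `G(P,t)` at degree `d`. -/
theorem G_reflect_formula {P : Type*} [PartialOrder P] [BoundedOrder P] [Fintype P]
    (ρ : P → ℕ) (d : ℕ) (hrk : IsRankFunction ρ d) (hE : IsEulerian ρ)
    (G H : P → P → Polynomial ℤ) (hGH : GHSystem ρ G H) :
    (G ⊥ ⊤).reflect d = ∑ x : P, (Polynomial.X - 1) ^ (ρ x) * G x ⊤ := by
  have h := hGH.reflect_G_eq_sum hE hrk.strictMono (bot_le : (⊥ : P) ≤ ⊤)
  rw [hrk.1, hrk.2.1] at h
  simpa using h
end

section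
/- Let C ⊂ M̄_R be a reflexive Gorenstein cone of dimension d̄ = d + r with dual reflexive Gorenstein cone C* ⊂ N̄_R, and let V, W be the Calabi-Yau complete intersections of dimension d − r associated to a nef-partition and its dual. Then the string-theoretic E-polynomials given by the formula E_st(V;u,v) = Σ_{(m,n) ∈ Λ(C,C*)} (u/v)^{deg m} · ((−1)^{ρ(x*(n))}/(uv)^r) (v−u)^{ρ(x(m))} B(P*_{(m,n)}; u,v) (uv−1)^{d̄ − ρ(x*(n))} · (1/(uv))^{deg n} satisfy the mirror duality E_st(V;u,v) = (−u)^{d−r} E_st(W; u^{−1}, v). -/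
open Finset
open scoped Classical BigOperators

/-- The convex polyhedral cone generated by a finite set `s` of vectors. -/
def coneGen {d : ℕ} (s : Finset (Fin d → ℝ)) : Set (Fin d → ℝ) :=
  { x | ∃ c : (Fin d → ℝ) → ℝ, (∀ v, 0 ≤ c v) ∧ x = ∑ v ∈ s, c v • v }

/-- `F` is a face of the cone `C`: it is cut out on `C` by a linear functional which is
nonnegative on `C`. -/
def IsFaceOf {d : ℕ} (C F : Set (Fin d → ℝ)) : Prop :=
  ∃ u : (Fin d → ℝ) →ₗ[ℝ] ℝ, (∀ x ∈ C, 0 ≤ u x) ∧ F = {x ∈ C | u x = 0}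

/-- The dimension of (the linear span of) a face. -/
noncomputable def faceDim {d : ℕ} (F : Set (Fin d → ℝ)) : ℕ :=
  Module.finrank ℝ (Submodule.span ℝ F)

/-- The canonical pairing `⟨x,y⟩ = ∑ᵢ xᵢ yᵢ` identifying `ℝ^d` with its dual. -/
def pairR {d : ℕ} (x y : Fin d → ℝ) : ℝ := ∑ i, x i * y i

/-- The dual cone `C* = {y : ⟨x,y⟩ ≥ 0 for all x ∈ C}`. -/
def dualCone {d : ℕ} (C : Set (Fin d → ℝ)) : Set (Fin d → ℝ) :=
  { y | ∀ x ∈ C, 0 ≤ pairR x y }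

/-- The face of the dual cone dual to a face `F` of `C`:
`F* = {y ∈ C* : ⟨x,y⟩ = 0 for all x ∈ F}`. -/
def dualFace {d : ℕ} (C F : Set (Fin d → ℝ)) : Set (Fin d → ℝ) :=
  { y ∈ dualCone C | ∀ x ∈ F, pairR x y = 0 }

/-- The canonical embedding of lattice points `ℤ^d → ℝ^d`. -/
def castR {d : ℕ} (m : Fin d → ℤ) : Fin d → ℝ := fun i => (m i : ℝ)

/-- The integral pairing `⟨m,n⟩ = ∑ᵢ mᵢ nᵢ` between the dual lattices `M` and `N`. -/
def pz {d : ℕ} (m n : Fin d → ℤ) : ℤ := ∑ i, m i * n i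

/-- The relative interior of a closed convex cone `C`: the points of `C` not lying on any
proper face. -/
def relint {d : ℕ} (C : Set (Fin d → ℝ)) : Set (Fin d → ℝ) :=
  { x ∈ C | ∀ u : (Fin d → ℝ) →ₗ[ℝ] ℝ,
      (∀ y ∈ C, 0 ≤ u y) → u x = 0 → ∀ y ∈ C, u y = 0 }

/-- The field of rational functions in two variables `u`, `v` over `ℤ`. -/
noncomputable abbrev KK : Type := FractionRing (MvPolynomial (Fin 2) ℤ)

/-- The variable `u`. -/
noncomputable def UU : KK := algebraMap (MvPolynomial (Fin 2) ℤ) KK (MvPolynomial.X 0)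

/-- The variable `v`. -/
noncomputable def VV : KK := algebraMap (MvPolynomial (Fin 2) ℤ) KK (MvPolynomial.X 1)

/-- Evaluation of a two-variable polynomial `b(u,v)` at a pair of elements of `KK`. -/
noncomputable def evB (b : MvPolynomial (Fin 2) ℤ) (u v : KK) : KK :=
  MvPolynomial.aeval ![u, v] b

/-- The minimal face of the cone `C` containing a point `x`. -/
def minFace {d : ℕ} (C : Set (Fin d → ℝ)) (x : Fin d → ℝ) : Set (Fin d → ℝ) :=
  ⋂₀ {F | IsFaceOf C F ∧ x ∈ F}

/-- `ρ(x(m))`: the dimension of the minimal face of `C` containing `m`. -/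
noncomputable def rhoMin {d : ℕ} (C : Set (Fin d → ℝ)) (x : Fin d → ℝ) : ℕ :=
  faceDim (minFace C x)

/-- `ρ(x*(n))`: the dimension of the intersection of `C` with the hyperplane `⟨·,n⟩ = 0`. -/
noncomputable def rhoPerp {d : ℕ} (C : Set (Fin d → ℝ)) (n : Fin d → ℝ) : ℕ :=
  faceDim (C ∩ {x | pairR x n = 0})

/-- `Λ(C,C*) = {(m,n) ∈ M̄ × N̄ : m ∈ C, n ∈ C*, ⟨m,n⟩ = 0}`. -/
def LambdaSet {d : ℕ} (C : Set (Fin d → ℝ)) : Set ((Fin d → ℤ) × (Fin d → ℤ)) :=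
  { p | castR p.1 ∈ C ∧ castR p.2 ∈ dualCone C ∧ pz p.1 p.2 = 0 }

/-- The coefficient of `u^i v^j` (for `i j : ℤ`) of a two-variable polynomial. -/
noncomputable def mcoeff (q : MvPolynomial (Fin 2) ℤ) (i j : ℤ) : ℤ :=
  if 0 ≤ i ∧ 0 ≤ j then
    MvPolynomial.coeff (Finsupp.single 0 i.toNat + Finsupp.single 1 j.toNat) q
  else 0

/-- The polynomial part of the summand `A_{(m,n)}(u,v)`:
`(-1)^(ρ(x*(n))) (v-u)^(ρ(x(m))) B(P*_{(m,n)};u,v) (uv-1)^(d̄-ρ(x*(n)))`. -/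
noncomputable def Apoly (rm rperp dbar : ℕ) (Bmn : MvPolynomial (Fin 2) ℤ) :
    MvPolynomial (Fin 2) ℤ :=
  (-1) ^ rperp * (MvPolynomial.X 1 - MvPolynomial.X 0) ^ rm * Bmn *
    (MvPolynomial.X 0 * MvPolynomial.X 1 - 1) ^ (dbar - rperp)

/-- The coefficient of `u^a v^b` in the string-theoretic `E`-polynomial
`E_st(V;u,v) = ∑_{(m,n) ∈ Λ(C,C*)} (u/v)^(deg m) A_{(m,n)}(u,v) (uv)^(-deg n)`, where
`A_{(m,n)}(u,v)` carries the extra factor `(uv)^(-r)`.  Here `deg m = ⟨m,n_C⟩` and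
`deg n = ⟨m_{C*},n⟩`. -/
noncomputable def EstCoeff {dbar : ℕ} (r : ℕ) (C : Set (Fin dbar → ℝ))
    (nC mC : Fin dbar → ℤ)
    (B : (Fin dbar → ℤ) → (Fin dbar → ℤ) → MvPolynomial (Fin 2) ℤ) (a b : ℤ) : ℤ :=
  ∑ᶠ p ∈ LambdaSet C,
    mcoeff (Apoly (rhoMin C (castR p.1)) (rhoPerp C (castR p.2)) dbar (B p.1 p.2))
      (a - (pz p.1 nC - pz mC p.2 - r)) (b - (-(pz p.1 nC) - pz mC p.2 - r))

/-!
The sum for `E_st(W)` runs over `Λ(C*, C)`, which is `Λ(C, C*)` with the two coordinates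
swapped, so the identity is checked term by term.

For `(m, n) ∈ Λ(C, C*)` the face dimensions are complementary:
`ρ_C(x(m)) + ρ_{C*}(x*(m)) = d̄` and `ρ_{C*}(x(n)) + ρ_C(x*(n)) = d̄`. Write `K = T^∨` for a
finite set `T` and let `p ∈ K`. The minimal face of `K` containing `p` is cut out by the vectors
of `T` that vanish at `p`, and its span is the orthogonal complement of their span. Their span
is also the span of the face `K^∨ ∩ p^⊥`, once we know `K^∨ = cone T`. This biduality follows
from Farkas' lemma, because a finitely generated cone is closed (Carathéodory).

Given these relations, substituting `u ↦ u⁻¹` exchanges the factors `(v - u)^ρ(x(m))` and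
`(uv - 1)^(d̄ - ρ(x*(n)))` up to powers of `u`. Combined with the duality of the `B`-polynomials,
this makes the polynomial part of each summand of `E_st(V)` equal to `(-u)^d̄` times that of
`E_st(W)` evaluated at `u⁻¹`. Comparing coefficients then gives the claim. The monomial shifts
`(u/v)^deg m (uv)^(-deg n - r)` turn `d̄` into `d̄ - 2r`.
-/

section Cones

variable {d : ℕ}

lemma pairR_eq_dotProduct (x y : Fin d → ℝ) : pairR x y = x ⬝ᵥ y := rfl

lemma pairR_comm (x y : Fin d → ℝ) : pairR x y = pairR y x := dotProduct_comm x y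

lemma coneGen_eq_hull (T : Finset (Fin d → ℝ)) :
    coneGen T = (PointedCone.hull ℝ (T : Set (Fin d → ℝ)) : Set (Fin d → ℝ)) := by
  ext x
  constructor
  · rintro ⟨c, hc, rfl⟩
    exact Submodule.sum_mem _ fun v hv =>
      Submodule.smul_mem _ (⟨c v, hc v⟩ : {a : ℝ // 0 ≤ a}) (Submodule.subset_span hv)
  · intro hx
    obtain ⟨f, -, rfl⟩ := Submodule.mem_span_finset.1 hx
    exact ⟨fun v => f v, fun v => (f v).2, rfl⟩

lemma subset_coneGen (T : Finset (Fin d → ℝ)) : (T : Set (Fin d → ℝ)) ⊆ coneGen T := by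
  rw [coneGen_eq_hull]; exact PointedCone.subset_hull

lemma coneGen_mono {S T : Finset (Fin d → ℝ)} (h : S ⊆ T) : coneGen S ⊆ coneGen T := by
  rw [coneGen_eq_hull, coneGen_eq_hull]; exact Submodule.span_mono (by exact_mod_cast h)

lemma span_coneGen (T : Finset (Fin d → ℝ)) :
    Submodule.span ℝ (coneGen T) = Submodule.span ℝ (T : Set (Fin d → ℝ)) := by
  rw [coneGen_eq_hull]; exact Submodule.span_span_of_tower _ _ _

lemma mem_coneGen_iff {T : Finset (Fin d → ℝ)} {x : Fin d → ℝ} :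
    x ∈ coneGen T ↔ ∃ c : (Fin d → ℝ) → ℝ, (∀ v ∈ T, 0 ≤ c v) ∧ x = ∑ v ∈ T, c v • v := by
  refine ⟨fun ⟨c, hc, hx⟩ => ⟨c, fun v _ => hc v, hx⟩, fun ⟨c, hc, hx⟩ => ?_⟩
  refine ⟨fun v => max (c v) 0, fun v => le_max_right _ _, hx.trans ?_⟩
  exact Finset.sum_congr rfl fun v hv => by dsimp only; rw [max_eq_left (hc v hv)]

lemma pairR_add_smul_right (v p x : Fin d → ℝ) (ε : ℝ) :
    pairR v (p + ε • x) = pairR v p + ε * pairR v x := by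
  simp only [pairR_eq_dotProduct, dotProduct_add, dotProduct_smul, smul_eq_mul]

lemma pairR_sum_smul_left (T : Finset (Fin d → ℝ)) (c : (Fin d → ℝ) → ℝ) (y : Fin d → ℝ) :
    pairR (∑ v ∈ T, c v • v) y = ∑ v ∈ T, c v * pairR v y := by
  simp only [pairR_eq_dotProduct, sum_dotProduct, smul_dotProduct, smul_eq_mul]

lemma mem_dualCone_coneGen_iff {T : Finset (Fin d → ℝ)} {y : Fin d → ℝ} :
    y ∈ dualCone (coneGen T) ↔ ∀ v ∈ T, 0 ≤ pairR v y := by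
  refine ⟨fun h v hv => h v (subset_coneGen T hv), ?_⟩
  rintro h x ⟨c, hc, rfl⟩
  rw [pairR_sum_smul_left]
  exact Finset.sum_nonneg fun v hv => mul_nonneg (hc v) (h v hv)

lemma exists_pairR_eq (u : (Fin d → ℝ) →ₗ[ℝ] ℝ) : ∃ w, ∀ x, u x = pairR w x :=
  ⟨(dotProductEquiv ℝ (Fin d)).symm u, fun x => by
    rw [pairR_eq_dotProduct, ← dotProductEquiv_apply_apply, LinearEquiv.apply_symm_apply]⟩

lemma exists_mem_coneGen_erase {t : Finset (Fin d → ℝ)} {x : Fin d → ℝ} (hx : x ∈ coneGen t)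
    {g : (Fin d → ℝ) → ℝ} (hg : ∑ v ∈ t, g v • v = 0) {v₁ : Fin d → ℝ} (hv₁ : v₁ ∈ t)
    (hg₁ : 0 < g v₁) : ∃ v₀ ∈ t, x ∈ coneGen (t.erase v₀) := by
  obtain ⟨c, hc, rfl⟩ := mem_coneGen_iff.1 hx
  -- Subtract `l • g`, with `l` the largest multiple keeping all coefficients nonnegative;
  -- this kills the coefficient of the minimiser `v₀`.
  obtain ⟨v₀, hv₀, hmin⟩ := Finset.exists_min_image (t.filter (0 < g ·)) (fun v => c v / g v)
    ⟨v₁, Finset.mem_filter.2 ⟨hv₁, hg₁⟩⟩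
  rw [Finset.mem_filter] at hv₀
  set l := c v₀ / g v₀
  have hl : 0 ≤ l := div_nonneg (hc _ hv₀.1) hv₀.2.le
  refine ⟨v₀, hv₀.1, mem_coneGen_iff.2 ⟨fun v => c v - l * g v, fun v hv => ?_, ?_⟩⟩
  · have hvt := Finset.mem_of_mem_erase hv
    rcases le_or_gt (g v) 0 with hgv | hgv
    · nlinarith [hc v hvt]
    · have := hmin v (Finset.mem_filter.2 ⟨hvt, hgv⟩)
      rw [le_div_iff₀ hgv] at this
      linarith
  · have hv₀zero : (c v₀ - l * g v₀) • v₀ = 0 := by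
      rw [div_mul_cancel₀ _ hv₀.2.ne', sub_self, zero_smul]
    rw [Finset.sum_erase t (f := fun v => (c v - l * g v) • v) hv₀zero]
    simp only [sub_smul, Finset.sum_sub_distrib, mul_smul, ← Finset.smul_sum, hg, smul_zero,
      sub_zero]

lemma exists_linearIndepOn_subset_mem_coneGen {T : Finset (Fin d → ℝ)} {x : Fin d → ℝ}
    (hx : x ∈ coneGen T) :
    ∃ t ⊆ T, LinearIndepOn ℝ id (t : Set (Fin d → ℝ)) ∧ x ∈ coneGen t := by
  obtain ⟨t, ht, hmin⟩ := Finset.exists_min_image (T.powerset.filter (x ∈ coneGen ·))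
    Finset.card ⟨T, Finset.mem_filter.2 ⟨Finset.mem_powerset_self T, hx⟩⟩
  simp only [Finset.mem_filter, Finset.mem_powerset] at ht hmin
  refine ⟨t, ht.1, ?_, ht.2⟩
  by_contra hdep
  obtain ⟨g, hg, v₁, hv₁, hne⟩ := not_linearIndepOn_finset_iff.1 hdep
  obtain ⟨g, hg, hpos⟩ : ∃ g : (Fin d → ℝ) → ℝ, ∑ v ∈ t, g v • v = 0 ∧ 0 < g v₁ := by
    rcases hne.lt_or_gt with h | h
    · exact ⟨-g, by simpa [neg_smul] using hg, neg_pos.2 h⟩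
    · exact ⟨g, by simpa using hg, h⟩
  obtain ⟨v₀, hv₀, hx₀⟩ := exists_mem_coneGen_erase ht.2 hg hv₁ hpos
  have hle := hmin _ ⟨(t.erase_subset v₀).trans ht.1, hx₀⟩
  rw [Finset.card_erase_of_mem hv₀] at hle
  have := Finset.card_pos.2 ⟨v₀, hv₀⟩
  omega

lemma isClosed_coneGen_of_linearIndepOn {t : Finset (Fin d → ℝ)}
    (ht : LinearIndepOn ℝ id (t : Set (Fin d → ℝ))) : IsClosed (coneGen t) := by
  set L := Fintype.linearCombination ℝ (fun v : (t : Set (Fin d → ℝ)) => (v : Fin d → ℝ))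
  have hL : LinearMap.ker L = ⊥ :=
    LinearMap.ker_eq_bot.2 (linearIndependent_iff_injective_fintypeLinearCombination.1 ht)
  have himage : coneGen t = L '' Set.Ici 0 := by
    ext x
    rw [mem_coneGen_iff]
    constructor
    · rintro ⟨c, hc, rfl⟩
      refine ⟨fun v => c v, fun v => hc v v.2, ?_⟩
      rw [Fintype.linearCombination_apply]
      exact Finset.sum_coe_sort t (fun v => c v • v)
    · rintro ⟨c, hc, rfl⟩
      refine ⟨fun v => if hv : v ∈ t then c ⟨v, hv⟩ else 0,
        fun v hv => by simpa [hv] using hc ⟨v, hv⟩, ?_⟩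
      rw [Fintype.linearCombination_apply, ← Finset.sum_coe_sort t]
      exact Finset.sum_congr rfl fun v _ => by simp
  rw [himage]
  exact (LinearMap.isClosedEmbedding_of_injective hL).isClosedMap _ isClosed_Ici

lemma isClosed_coneGen (T : Finset (Fin d → ℝ)) : IsClosed (coneGen T) := by
  have hunion : coneGen T = ⋃ (t : Finset (Fin d → ℝ))
      (_ : t ∈ T.powerset.filter fun t : Finset (Fin d → ℝ) =>
        LinearIndepOn ℝ id (t : Set (Fin d → ℝ))), coneGen t := by
    ext x
    simp only [Set.mem_iUnion, Finset.mem_filter, Finset.mem_powerset, exists_prop]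
    refine ⟨fun hx => ?_, fun ⟨t, ⟨htT, _⟩, hx⟩ => coneGen_mono htT hx⟩
    obtain ⟨t, htT, ht, hx⟩ := exists_linearIndepOn_subset_mem_coneGen hx
    exact ⟨t, ⟨htT, ht⟩, hx⟩
  rw [hunion]
  exact isClosed_biUnion_finset fun t ht => isClosed_coneGen_of_linearIndepOn
    (Finset.mem_filter.1 ht).2

lemma dualCone_dualCone_coneGen (T : Finset (Fin d → ℝ)) :
    dualCone (dualCone (coneGen T)) = coneGen T := by
  refine Set.Subset.antisymm (fun z hz => ?_) fun x hx y hy => pairR_comm x y ▸ hy x hx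
  by_contra hzT
  let K : ProperCone ℝ (Fin d → ℝ) :=
    ⟨PointedCone.hull ℝ T, by
      have h := isClosed_coneGen T
      rwa [coneGen_eq_hull] at h⟩
  obtain ⟨f, hf, hfz⟩ := K.hyperplane_separation_point (x₀ := z)
    (by rwa [coneGen_eq_hull] at hzT)
  obtain ⟨w, hw⟩ := exists_pairR_eq f.toLinearMap
  have hwT : w ∈ dualCone (coneGen T) := fun x hx => by
    rw [pairR_comm, ← hw]
    exact hf x (by rwa [coneGen_eq_hull] at hx)
  have := hz w hwT
  rw [← hw] at this
  exact absurd hfz (not_lt.2 this)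

end Cones

section Faces

open Filter Topology

variable {d : ℕ}

lemma isFaceOf_inter_perp {C : Set (Fin d → ℝ)} {y : Fin d → ℝ} (hy : y ∈ dualCone C) :
    IsFaceOf C (C ∩ {x | pairR x y = 0}) :=
  ⟨dotProductEquiv ℝ (Fin d) y, fun x hx => by
    rw [dotProductEquiv_apply_apply, dotProduct_comm]; exact hy x hx, by
    ext x; simp [pairR_eq_dotProduct, dotProduct_comm y x]⟩

lemma rhoMin_le_rhoPerp {C : Set (Fin d → ℝ)} {x y : Fin d → ℝ} (hx : x ∈ C)
    (hy : y ∈ dualCone C) (hxy : pairR x y = 0) : rhoMin C x ≤ rhoPerp C y :=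
  Submodule.finrank_mono <| Submodule.span_mono <|
    Set.sInter_subset_of_mem ⟨isFaceOf_inter_perp hy, hx, hxy⟩

lemma isFaceOf_forall_pairR_eq_zero {K : Set (Fin d → ℝ)} {S : Finset (Fin d → ℝ)}
    (hS : ∀ v ∈ S, v ∈ dualCone K) :
    IsFaceOf K {x ∈ K | ∀ v ∈ S, pairR v x = 0} := by
  refine ⟨dotProductEquiv ℝ (Fin d) (∑ v ∈ S, v), fun x hx => ?_, ?_⟩
  · simp only [dotProductEquiv_apply_apply, sum_dotProduct]
    exact Finset.sum_nonneg fun v hv => by rw [dotProduct_comm]; exact hS v hv x hx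
  · ext x
    simp only [Set.mem_ofPred, dotProductEquiv_apply_apply, sum_dotProduct]
    refine and_congr_right fun hx => (Finset.sum_eq_zero_iff_of_nonneg fun v hv => ?_).symm
    rw [pairR_comm]; exact hS v hv x hx

variable {T : Finset (Fin d → ℝ)} {p : Fin d → ℝ}

lemma coneGen_inter_perp (hp : p ∈ dualCone (coneGen T)) :
    coneGen T ∩ {y | pairR y p = 0} = coneGen (T.filter (pairR · p = 0)) := by
  refine Set.Subset.antisymm ?_ ?_
  · rintro y ⟨⟨c, hc, rfl⟩, hyp⟩
    rw [Set.mem_ofPred, pairR_sum_smul_left] at hyp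
    have hzero := (Finset.sum_eq_zero_iff_of_nonneg fun v hv =>
      mul_nonneg (hc v) (hp v (subset_coneGen T hv))).1 hyp
    refine ⟨c, hc, (Finset.sum_subset (Finset.filter_subset _ _) fun v hvT hv => ?_).symm⟩
    have hvp : pairR v p ≠ 0 := fun h => hv (Finset.mem_filter.2 ⟨hvT, h⟩)
    rw [(mul_eq_zero.1 (hzero v hvT)).resolve_right hvp, zero_smul]
  · rintro y ⟨c, hc, rfl⟩
    refine ⟨coneGen_mono (Finset.filter_subset _ _) ⟨c, hc, rfl⟩, ?_⟩
    rw [Set.mem_ofPred, pairR_sum_smul_left]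
    exact Finset.sum_eq_zero fun v hv => by rw [(Finset.mem_filter.1 hv).2, mul_zero]

lemma minFace_dualCone_coneGen (hp : p ∈ dualCone (coneGen T)) :
    minFace (dualCone (coneGen T)) p =
      {x ∈ dualCone (coneGen T) | ∀ v ∈ T.filter (pairR · p = 0), pairR v x = 0} := by
  refine Set.Subset.antisymm (Set.sInter_subset_of_mem
    ⟨isFaceOf_forall_pairR_eq_zero fun v hv => ?_, hp, fun v hv => (Finset.mem_filter.1 hv).2⟩)
    fun x hx => ?_
  · rw [dualCone_dualCone_coneGen]
    exact subset_coneGen T (Finset.filter_subset _ _ hv)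
  · rintro G ⟨⟨u, hu, rfl⟩, hpG⟩
    obtain ⟨w, hw⟩ := exists_pairR_eq u
    have hwT : w ∈ coneGen T := by
      rw [← dualCone_dualCone_coneGen T]
      intro y hy
      rw [pairR_comm, ← hw]; exact hu y hy
    obtain ⟨c, hc, rfl⟩ : w ∈ coneGen (T.filter (pairR · p = 0)) := by
      rw [← coneGen_inter_perp hp]
      refine ⟨hwT, ?_⟩
      show pairR w p = 0
      rw [← hw]; exact hpG.2
    refine ⟨hx.1, ?_⟩
    show u x = 0
    rw [hw, pairR_sum_smul_left]
    exact Finset.sum_eq_zero fun v hv => by rw [hx.2 v hv, mul_zero]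

abbrev rowMatrix (S : Finset (Fin d → ℝ)) : Matrix S (Fin d) ℝ := Matrix.of fun v => v

lemma mem_ker_rowMatrix {S : Finset (Fin d → ℝ)} {x : Fin d → ℝ} :
    x ∈ LinearMap.ker (rowMatrix S).mulVecLin ↔ ∀ v ∈ S, pairR v x = 0 := by
  simp [funext_iff, Matrix.mulVec, pairR_eq_dotProduct]

lemma finrank_span_add_finrank_ker_rowMatrix (S : Finset (Fin d → ℝ)) :
    Module.finrank ℝ (Submodule.span ℝ (S : Set (Fin d → ℝ))) +
      Module.finrank ℝ (LinearMap.ker (rowMatrix S).mulVecLin) = d := by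
  have hrow : Set.range (rowMatrix S).row = S := Subtype.range_coe
  rw [← hrow, ← Matrix.rank_eq_finrank_span_row, Matrix.rank,
    LinearMap.finrank_range_add_finrank_ker, Module.finrank_fin_fun]

lemma exists_pos_add_smul_mem_dualCone_coneGen (hp : p ∈ dualCone (coneGen T)) {x : Fin d → ℝ}
    (hx : ∀ v ∈ T.filter (pairR · p = 0), pairR v x = 0) :
    ∃ ε : ℝ, 0 < ε ∧ p + ε • x ∈ dualCone (coneGen T) := by
  -- The constraints tight at `p` stay tight along `x`; the others stay strict for small `ε`.
  have hev : ∀ᶠ ε in 𝓝[>] (0 : ℝ), ∀ v ∈ T, 0 ≤ pairR v (p + ε • x) := by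
    refine (eventually_all_finset T).2 fun v hv => ?_
    by_cases hv0 : pairR v p = 0
    · exact Eventually.of_forall fun ε => by
        rw [pairR_add_smul_right, hv0, hx v (Finset.mem_filter.2 ⟨hv, hv0⟩), mul_zero, add_zero]
    · have hpos : 0 < pairR v p := lt_of_le_of_ne (hp v (subset_coneGen T hv)) (Ne.symm hv0)
      have hcont : Continuous fun ε : ℝ => pairR v p + ε * pairR v x := by fun_prop
      have := (hcont.tendsto 0).eventually (lt_mem_nhds (by simpa using hpos))
      exact nhdsWithin_le_nhds (this.mono fun ε hε => (pairR_add_smul_right v p x ε).symm ▸ hε.le)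
  obtain ⟨ε, hεK, hε⟩ := (hev.and self_mem_nhdsWithin).exists
  exact ⟨ε, hε, mem_dualCone_coneGen_iff.2 hεK⟩

lemma span_minFace_dualCone_coneGen (hp : p ∈ dualCone (coneGen T)) :
    Submodule.span ℝ (minFace (dualCone (coneGen T)) p) =
      LinearMap.ker (rowMatrix (T.filter (pairR · p = 0))).mulVecLin := by
  rw [minFace_dualCone_coneGen hp]
  refine le_antisymm (Submodule.span_le.2 fun x hx => mem_ker_rowMatrix.2 hx.2) fun x hx => ?_
  rw [mem_ker_rowMatrix] at hx
  have hmem : ∀ t : ℝ, p + t • x ∈ dualCone (coneGen T) → p + t • x ∈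
      {x ∈ dualCone (coneGen T) | ∀ v ∈ T.filter (pairR · p = 0), pairR v x = 0} :=
    fun t ht => ⟨ht, fun v hv => by
      rw [pairR_add_smul_right, (Finset.mem_filter.1 hv).2, hx v hv, mul_zero, add_zero]⟩
  obtain ⟨ε, hε, hεK⟩ := exists_pos_add_smul_mem_dualCone_coneGen hp hx
  have hxeq : x = ε⁻¹ • ((p + ε • x) - (p + (0 : ℝ) • x)) := by
    rw [zero_smul, add_zero, add_sub_cancel_left, smul_smul, inv_mul_cancel₀ hε.ne', one_smul]
  rw [hxeq]
  refine Submodule.smul_mem _ _ (Submodule.sub_mem _ (Submodule.subset_span (hmem ε hεK))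
    (Submodule.subset_span (hmem 0 ?_)))
  rwa [zero_smul, add_zero]

theorem rhoMin_add_rhoPerp (hp : p ∈ dualCone (coneGen T)) :
    rhoMin (dualCone (coneGen T)) p + rhoPerp (coneGen T) p = d := by
  rw [rhoMin, faceDim, span_minFace_dualCone_coneGen hp, rhoPerp, faceDim,
    coneGen_inter_perp hp, span_coneGen, add_comm]
  exact finrank_span_add_finrank_ker_rowMatrix _

end Faces

namespace Polynomial

theorem natDegree_le_and_eq_C_mul_reflect {R S : Type*} [CommRing R] [Field S]
    {g : R →+* S} {u : S} (hu : u ≠ 0) (hinj : Function.Injective fun P : R[X] => P.eval₂ g u)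
    {c : R} (hc : IsUnit c) {D : ℕ} {P Q : R[X]}
    (h : P.eval₂ g u = g c * u ^ D * Q.eval₂ g u⁻¹) :
    Q.natDegree ≤ D ∧ P = C c * reflect D Q := by
  obtain ⟨k, hk⟩ : ∃ k, max D Q.natDegree = D + k :=
    ⟨_, (Nat.add_sub_of_le (le_max_left _ _)).symm⟩
  have hrefl : (reflect (D + k) Q).eval₂ g u = u ^ (D + k) * Q.eval₂ g u⁻¹ := by
    let _ : Invertible u⁻¹ := invertibleOfNonzero (inv_ne_zero hu)
    have := eval₂_reflect_mul_pow g u⁻¹ (D + k) Q (hk ▸ le_max_right _ _)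
    rw [invOf_eq_inv, inv_inv] at this
    rw [← this, mul_comm, mul_assoc, ← mul_pow, inv_mul_cancel₀ hu, one_pow, mul_one]
  have key : X ^ k * P = C c * reflect (D + k) Q := hinj <| by
    simp only [eval₂_mul, eval₂_X_pow, eval₂_C, hrefl, h, pow_add]
    ring
  obtain rfl : k = 0 := by
    by_contra hk0
    have hQ : Q.natDegree = D + k := by omega
    have hQ0 : Q ≠ 0 := by rintro rfl; rw [natDegree_zero] at hQ; omega
    have := congrArg (coeff · 0) key
    simp only [coeff_X_pow_mul', coeff_C_mul, coeff_reflect, revAt_le (Nat.zero_le _),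
      Nat.sub_zero, if_neg (Nat.pos_of_ne_zero hk0).not_ge, ← hQ] at this
    exact leadingCoeff_ne_zero.2 hQ0 ((hc.mul_right_eq_zero).1 this.symm)
  exact ⟨by omega, by simpa using key⟩

end Polynomial

section Algebra

open MvPolynomial

lemma UU_ne_zero : UU ≠ 0 :=
  (map_ne_zero_iff _ (IsFractionRing.injective _ _)).2 (X_ne_zero 0)

lemma evB_eq_eval₂_finSuccEquiv (A : MvPolynomial (Fin 2) ℤ) (u v : KK) :
    evB A u v =
      (finSuccEquiv ℤ 1 A).eval₂ (aeval ![v] : MvPolynomial (Fin 1) ℤ →ₐ[ℤ] KK).toRingHom u := by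
  have : (aeval ![u, v] : MvPolynomial (Fin 2) ℤ →ₐ[ℤ] KK).toRingHom =
      (Polynomial.eval₂RingHom (aeval ![v] : MvPolynomial (Fin 1) ℤ →ₐ[ℤ] KK).toRingHom u).comp
        (finSuccEquiv ℤ 1 : MvPolynomial (Fin 2) ℤ →+* Polynomial (MvPolynomial (Fin 1) ℤ)) := by
    refine ringHom_ext' (RingHom.ext_int _ _) fun i => ?_
    fin_cases i
    · simp [finSuccEquiv_X_zero]
    · have h1 : finSuccEquiv ℤ 1 (X 1) = Polynomial.C (X 0) := finSuccEquiv_X_succ (j := 0)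
      simp [h1]
  exact DFunLike.congr_fun this A

lemma evB_UU_VV (A : MvPolynomial (Fin 2) ℤ) :
    evB A UU VV = algebraMap (MvPolynomial (Fin 2) ℤ) KK A := by
  have : (aeval ![UU, VV] : MvPolynomial (Fin 2) ℤ →ₐ[ℤ] KK).toRingHom = algebraMap _ KK :=
    ringHom_ext' (RingHom.ext_int _ _) fun i => by fin_cases i <;> simp [UU, VV]
  exact DFunLike.congr_fun this A

lemma mcoeff_eq_coeff_finSuccEquiv (A : MvPolynomial (Fin 2) ℤ) {i j : ℤ} (hi : 0 ≤ i)
    (hj : 0 ≤ j) :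
    mcoeff A i j = coeff (Finsupp.single 0 j.toNat) ((finSuccEquiv ℤ 1 A).coeff i.toNat) := by
  rw [mcoeff, if_pos ⟨hi, hj⟩, finSuccEquiv_coeff_coeff]
  congr 1
  ext k
  refine Fin.cases ?_ (fun k => ?_) k
  · simp
  · rw [Finsupp.cons_succ, Fin.fin_one_eq_zero k]
    simp

theorem mcoeff_eq_neg_one_pow_mul_mcoeff {A A' : MvPolynomial (Fin 2) ℤ} {D : ℕ}
    (h : evB A UU VV = (-1) ^ D * UU ^ D * evB A' UU⁻¹ VV) (i j : ℤ) :
    mcoeff A i j = (-1) ^ D * mcoeff A' (D - i) j := by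
  set g := (aeval ![VV] : MvPolynomial (Fin 1) ℤ →ₐ[ℤ] KK).toRingHom
  have hinj :
      Function.Injective fun P : Polynomial (MvPolynomial (Fin 1) ℤ) => P.eval₂ g UU := by
    have : (fun P : Polynomial (MvPolynomial (Fin 1) ℤ) => P.eval₂ g UU) =
        algebraMap (MvPolynomial (Fin 2) ℤ) KK ∘ (finSuccEquiv ℤ 1).symm := by
      funext P
      rw [Function.comp_apply, ← evB_UU_VV, evB_eq_eval₂_finSuccEquiv, AlgEquiv.apply_symm_apply]
    rw [this]
    exact (IsFractionRing.injective _ _).comp (finSuccEquiv ℤ 1).symm.injective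
  obtain ⟨hdeg, hA⟩ := Polynomial.natDegree_le_and_eq_C_mul_reflect UU_ne_zero hinj
    (c := C ((-1) ^ D)) (D := D) (P := finSuccEquiv ℤ 1 A) (Q := finSuccEquiv ℤ 1 A')
    ((isUnit_neg_one.pow D).map C) <| by
      rw [← evB_eq_eval₂_finSuccEquiv, ← evB_eq_eval₂_finSuccEquiv, h]
      simp [g]
  by_cases hj : 0 ≤ j
  swap
  · simp [mcoeff, hj]
  rcases lt_or_ge i 0 with hi | hi
  · rw [mcoeff_eq_coeff_finSuccEquiv A' (by omega) hj,
      Polynomial.coeff_eq_zero_of_natDegree_lt (by omega), coeff_zero, mul_zero, mcoeff,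
      if_neg (by omega)]
  rcases le_or_gt i D with hiD | hiD
  · rw [mcoeff_eq_coeff_finSuccEquiv _ hi hj, mcoeff_eq_coeff_finSuccEquiv _ (by omega) hj, hA,
      Polynomial.coeff_C_mul, Polynomial.coeff_reflect, Polynomial.revAt_le (by omega),
      coeff_C_mul]
    congr 3
    omega
  · rw [mcoeff_eq_coeff_finSuccEquiv _ hi hj, hA, Polynomial.coeff_C_mul,
      Polynomial.coeff_reflect, Polynomial.revAt_eq_self_of_lt (by omega),
      Polynomial.coeff_eq_zero_of_natDegree_lt (by omega), mul_zero, coeff_zero, mcoeff,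
      if_neg (by omega), mul_zero]

lemma evB_Apoly (P : MvPolynomial (Fin 2) ℤ) (u v : KK) (r₁ r₂ D : ℕ) :
    evB (Apoly r₁ r₂ D P) u v
      = (-1) ^ r₂ * (v - u) ^ r₁ * evB P u v * (u * v - 1) ^ (D - r₂) := by
  simp [Apoly, evB]

/-- The substitution `u ↦ u⁻¹` exchanges the factors `v - u` and `u v - 1` up to powers of `u`:
`v - u⁻¹ = (u v - 1) u⁻¹` and `u⁻¹ v - 1 = (v - u) u⁻¹`. -/
theorem evB_Apoly_duality {ρm ρn D : ℕ} (hmn : ρm ≤ ρn) (hnD : ρn ≤ D)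
    {Bp Bq : MvPolynomial (Fin 2) ℤ}
    (h : evB Bp UU VV = (-UU) ^ (ρn - ρm) * evB Bq UU⁻¹ VV) :
    evB (Apoly ρm ρn D Bp) UU VV
      = (-1) ^ D * UU ^ D * evB (Apoly (D - ρn) (D - ρm) D Bq) UU⁻¹ VV := by
  obtain ⟨c, rfl⟩ := Nat.exists_eq_add_of_le hmn
  obtain ⟨e, rfl⟩ := Nat.exists_eq_add_of_le hnD
  have hU : UU ≠ 0 := UU_ne_zero
  rw [evB_Apoly, evB_Apoly, h, Nat.add_sub_cancel_left, Nat.add_sub_cancel_left,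
    show ρm + c + e - ρm = c + e by omega, show ρm + c + e - (c + e) = ρm by omega]
  have hinv₁ : VV - UU⁻¹ = (UU * VV - 1) * UU⁻¹ := by field_simp
  have hinv₂ : UU⁻¹ * VV - 1 = (VV - UU) * UU⁻¹ := by field_simp
  generalize evB Bq UU⁻¹ VV = b
  rw [hinv₁, hinv₂, mul_pow, mul_pow, neg_pow, inv_pow, inv_pow]
  field_simp
  ring_nf
  simp only [pow_mul', neg_one_sq, one_pow, mul_one]

end Algebra

section Lattice

variable {d : ℕ}

lemma pz_comm (m n : Fin d → ℤ) : pz m n = pz n m := dotProduct_comm m n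

lemma pairR_castR (m n : Fin d → ℤ) : pairR (castR m) (castR n) = pz m n := by
  simp [pairR, pz, castR]

lemma LambdaSet_dualCone {C : Set (Fin d → ℝ)} (hC : dualCone (dualCone C) = C) :
    LambdaSet (dualCone C) = Prod.swap '' LambdaSet C := by
  rw [Set.image_swap_eq_preimage_swap]
  ext ⟨n, m⟩
  simp only [LambdaSet, Set.mem_ofPred_eq, Set.mem_preimage, Prod.swap_prod_mk, hC, pz_comm n m]
  tauto

end Lattice

theorem mirror_duality_Est_general {dbar : ℕ} (r : ℕ) (h2r : 2 * r ≤ dbar)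
    (s : Finset (Fin dbar → ℤ))
    (C : Set (Fin dbar → ℝ)) (hC : C = coneGen (s.image castR))
    (nC mC : Fin dbar → ℤ)
    (sD : Finset (Fin dbar → ℤ))
    (hD : dualCone C = coneGen (sD.image castR))
    (Bp Bq : (Fin dbar → ℤ) → (Fin dbar → ℤ) → MvPolynomial (Fin 2) ℤ)
    (hdual : ∀ m n : Fin dbar → ℤ, (m, n) ∈ LambdaSet C →
      evB (Bp m n) UU VV
        = (-UU) ^ (rhoPerp C (castR n) - rhoMin C (castR m)) * evB (Bq n m) UU⁻¹ VV) :
    ∀ a b : ℤ,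
      EstCoeff r C nC mC Bp a b
        = (-1 : ℤ) ^ (dbar - 2 * r) *
            EstCoeff r (dualCone C) mC nC Bq (((dbar : ℤ) - 2 * r) - a) b := by
  intro a b
  have hbid : dualCone (dualCone C) = C := hC ▸ dualCone_dualCone_coneGen _
  have hsign : (-1 : ℤ) ^ (dbar - 2 * r) = (-1) ^ dbar := by
    conv_rhs => rw [← Nat.sub_add_cancel h2r, pow_add, pow_mul, neg_one_sq, one_pow, mul_one]
  simp only [EstCoeff]
  rw [LambdaSet_dualCone hbid, finsum_mem_image Prod.swap_injective.injOn, mul_finsum_mem]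
  refine finsum_mem_congr rfl ?_
  rintro ⟨m, n⟩ ⟨hm, hn, hmn0⟩
  have hle : rhoMin C (castR m) ≤ rhoPerp C (castR n) :=
    rhoMin_le_rhoPerp hm hn (by rw [pairR_castR, hmn0, Int.cast_zero])
  have hdim_m := rhoMin_add_rhoPerp (T := sD.image castR) (p := castR m) (by rwa [← hD, hbid])
  have hdim_n := rhoMin_add_rhoPerp (T := s.image castR) (p := castR n) (by rwa [← hC])
  rw [← hD, hbid] at hdim_m
  rw [← hC] at hdim_n
  simp only [Prod.fst_swap, Prod.snd_swap]
  rw [show rhoPerp (dualCone C) (castR m) = dbar - rhoMin C (castR m) by omega,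
    show rhoMin (dualCone C) (castR n) = dbar - rhoPerp C (castR n) by omega, hsign,
    mcoeff_eq_neg_one_pow_mul_mcoeff
      (evB_Apoly_duality hle (by omega) (hdual m n ⟨hm, hn, hmn0⟩))]
  congr 2 <;> rw [pz_comm n mC, pz_comm nC m] <;> ring

/-- Mirror duality for string-theoretic Hodge numbers: for dual reflexive Gorenstein cones
`C`, `C*` of dimension `d̄ = d + r` arising from a nef-partition and its dual, the
string-theoretic `E`-polynomials of the associated `(d-r)`-dimensional Calabi-Yau complete
intersections `V` and `W`, given by the explicit sum over `Λ(C,C*)`, satisfy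
`E_st(V;u,v) = (-u)^(d-r) E_st(W;u⁻¹,v)`, stated here coefficientwise: the coefficient of
`u^a v^b` in `E_st(V)` equals `(-1)^(d-r)` times the coefficient of `u^(d-r-a) v^b` in
`E_st(W)`.  The `B`-polynomials of the posets `P*_{(m,n)}` enter through the assignments
`Bp` (for `V`) and `Bq` (for `W`), related by the duality
`B(P;u,v) = (-u)^(rank P) B(P*;u⁻¹,v)`. -/
theorem mirror_duality_Est {dbar : ℕ} (r : ℕ) (h2r : 2 * r ≤ dbar)
    (s : Finset (Fin dbar → ℤ))
    (C : Set (Fin dbar → ℝ)) (hC : C = coneGen (s.image castR))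
    (hfull : Submodule.span ℝ C = ⊤)
    (hpointed : ∀ x ∈ C, -x ∈ C → x = 0)
    (nC mC : Fin dbar → ℤ)
    (hgorC : ∀ m ∈ s, pz m nC = 1)
    (hposC : ∀ x ∈ C, x ≠ 0 → 0 < ∑ i, x i * (nC i : ℝ))
    (sD : Finset (Fin dbar → ℤ))
    (hD : dualCone C = coneGen (sD.image castR))
    (hgorD : ∀ n ∈ sD, pz mC n = 1)
    (hposD : ∀ y ∈ dualCone C, y ≠ 0 → 0 < ∑ i, y i * (mC i : ℝ))
    (hidx : pz mC nC = (r : ℤ))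
    (Bp Bq : (Fin dbar → ℤ) → (Fin dbar → ℤ) → MvPolynomial (Fin 2) ℤ)
    (hdual : ∀ m n : Fin dbar → ℤ, (m, n) ∈ LambdaSet C →
      evB (Bp m n) UU VV
        = (-UU) ^ (rhoPerp C (castR n) - rhoMin C (castR m)) * evB (Bq n m) UU⁻¹ VV) :
    ∀ a b : ℤ,
      EstCoeff r C nC mC Bp a b
        = (-1 : ℤ) ^ (dbar - 2 * r) *
            EstCoeff r (dualCone C) mC nC Bq (((dbar : ℤ) - 2 * r) - a) b :=
  mirror_duality_Est_general r h2r s C hC nC mC sD hD Bp Bq hdual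
end
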